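/- arXiv:2604.02533 — 7 statements merged into one kernel-verified Lean document; each statement's English description precedes it below -/
import Mathlib

section
/- Let m > 0 and let U : ℝ → ℝ be continuous on [0,∞), continuously differentiable on (0,∞) with U(0) = 0, U'(q) > 0 for q > 0, and U(q) → ∞ as q → ∞; let q_max(E) denote the unique q > 0 with U(q) = E. Fix E₀ > 0 and assume the function q ↦ (E − U(q))^{−1/2} is interval-integrable on (0, q_max(E)) for E in a neighbourhood of E₀. Then the action J(E) = (√(2m)/π) ∫₀^{q_max(E)} √(E − U(q)) dq is differentiable at E₀ with derivative J'(E₀) = (√(2m)/(2π)) ∫₀^{q_max(E₀)} (E₀ − U(q))^{−1/2} dq; in particular the endpoint contribution from q_max(E) vanishes because E − U(q_max(E)) = 0. -/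
/-!
Split the integral at `q₀ = qmax E₀`. On `(0, q₀)` we have `U q < E₀`, and
`|√(E - U q) - √(E₀ - U q)| ≤ |E - E₀| (E₀ - U q)^(-1/2)`, an integrable Lipschitz bound, so the
derivative can be taken under the integral sign. The remaining piece `∫_{q₀}^{qmax E} √(E - U q)`
has integrand at most `√|E - E₀|` on an interval of length `O(|E - E₀|)`, because `qmax` is the
inverse of `U` and `U' q₀ > 0`; hence it is `o(E - E₀)` and contributes nothing.
-/

open Real Set Filter Topology MeasureTheory Asymptotics Interval

theorem hasDerivAt_integral_of_dominated_loc_of_lip' {α E : Type*} [MeasurableSpace α]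
    {μ : Measure α} [NormedAddCommGroup E] [NormedSpace ℝ E]
    {F : ℝ → α → E} {F' : α → E} {bound : α → ℝ} {x₀ : ℝ} {s : Set ℝ} (hs : s ∈ 𝓝 x₀)
    (hF_meas : ∀ x ∈ s, AEStronglyMeasurable (F x) μ) (hF_int : Integrable (F x₀) μ)
    (hF'_meas : AEStronglyMeasurable F' μ)
    (h_lipsch : ∀ᵐ a ∂μ, ∀ x ∈ s, ‖F x a - F x₀ a‖ ≤ bound a * ‖x - x₀‖)
    (bound_integrable : Integrable bound μ)
    (h_diff : ∀ᵐ a ∂μ, HasDerivAt (F · a) (F' a) x₀) :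
    HasDerivAt (fun x ↦ ∫ a, F x a ∂μ) (∫ a, F' a ∂μ) x₀ := by
  set L : E →L[ℝ] ℝ →L[ℝ] E := ContinuousLinearMap.smulRightL ℝ ℝ E 1
  have hL : AEStronglyMeasurable (L ∘ F') μ := L.continuous.comp_aestronglyMeasurable hF'_meas
  obtain ⟨hLF'_int, key⟩ := hasFDerivAt_integral_of_dominated_loc_of_lip' hs hF_meas hF_int hL
    h_lipsch bound_integrable (h_diff.mono fun _ h ↦ h.hasFDerivAt)
  have hF'_int : Integrable F' μ := by
    rw [← integrable_norm_iff hL] at hLF'_int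
    simpa [L, Function.comp_def, integrable_norm_iff hF'_meas] using hLF'_int
  by_cases hE : CompleteSpace E; swap
  · simpa [integral, hE] using hasDerivAt_const x₀ 0
  rw [hasDerivAt_iff_hasFDerivAt]
  simpa only [Function.comp_def, ContinuousLinearMap.integral_comp_comm _ hF'_int] using! key

theorem Real.abs_sqrt_sub_sqrt_le {a b : ℝ} (hb : 0 < b) : |√a - √b| ≤ |a - b| / √b := by
  have hb' : 0 < √b := sqrt_pos.mpr hb
  rw [le_div_iff₀ hb']
  rcases le_or_gt a 0 with ha | ha
  · rw [sqrt_eq_zero'.mpr ha, zero_sub, abs_neg, abs_of_pos hb', mul_self_sqrt hb.le,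
      abs_of_neg (by linarith)]
    linarith
  · calc |√a - √b| * √b ≤ |√a - √b| * (√a + √b) := by
          gcongr; exact le_add_of_nonneg_left (sqrt_nonneg a)
      _ = |(√a - √b) * (√a + √b)| := by rw [abs_mul, abs_of_pos (by positivity : 0 < √a + √b)]
      _ = |a - b| := by
        rw [show (√a - √b) * (√a + √b) = √a * √a - √b * √b by ring, mul_self_sqrt ha.le,
          mul_self_sqrt hb.le]

theorem Real.rpow_neg_half_eq_inv_sqrt {x : ℝ} (hx : 0 ≤ x) : x ^ (-(1 / 2) : ℝ) = (√x)⁻¹ := by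
  rw [rpow_neg hx, ← sqrt_eq_rpow]

theorem hasDerivAt_sqrt_sub_const {c x : ℝ} (hx : c < x) :
    HasDerivAt (fun y ↦ √(y - c)) ((x - c) ^ (-(1 / 2) : ℝ) / 2) x := by
  have h := (hasDerivAt_sqrt (sub_pos.mpr hx).ne').comp x ((hasDerivAt_id x).sub_const c)
  refine h.congr_deriv ?_
  rw [rpow_neg_half_eq_inv_sqrt (sub_pos.mpr hx).le]
  ring

theorem StrictMonoOn.hasDerivAt_of_rightInvOn {f g : ℝ → ℝ} {s t : Set ℝ} {f' y₀ : ℝ}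
    (hf : StrictMonoOn f s) (hs : s ∈ 𝓝 (g y₀)) (ht : t ∈ 𝓝 y₀) (hgts : MapsTo g t s)
    (hgf : RightInvOn g f t) (hf' : HasDerivAt f f' (g y₀)) (hf'0 : f' ≠ 0) :
    HasDerivAt g f'⁻¹ y₀ := by
  have hmono : MonotoneOn g t := fun y hy y' hy' hyy' ↦
    (hf.le_iff_le (hgts hy) (hgts hy')).mp (by rwa [hgf hy, hgf hy'])
  have himage : g '' t ∈ 𝓝 (g y₀) := by
    have hft : f ⁻¹' t ∈ 𝓝 (g y₀) :=
      hf'.continuousAt.preimage_mem_nhds (by rwa [hgf (mem_of_mem_nhds ht)])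
    refine mem_of_superset (inter_mem hs hft) fun x ⟨hxs, hxt⟩ ↦ ⟨f x, hxt, ?_⟩
    exact hf.injOn (hgts hxt) hxs (hgf hxt)
  exact hf'.of_local_left_inverse (continuousAt_of_monotoneOn_of_image_mem_nhds hmono ht himage)
    hf'0 (mem_of_superset ht fun _ hy ↦ hgf hy)

theorem hasDerivAt_intervalIntegral_zero_of_norm_le {E : Type*} [NormedAddCommGroup E]
    [NormedSpace ℝ E] {F : ℝ → ℝ → E} {b ε : ℝ → ℝ} {b' x₀ : ℝ}
    (hb : HasDerivAt b b' x₀) (hε : Tendsto ε (𝓝 x₀) (𝓝 0))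
    (hF : ∀ᶠ x in 𝓝 x₀, ∀ q ∈ Ι (b x₀) (b x), ‖F x q‖ ≤ ε x) :
    HasDerivAt (fun x ↦ ∫ q in b x₀..b x, F x q) 0 x₀ := by
  rw [hasDerivAt_iff_isLittleO]
  simp only [intervalIntegral.integral_same, sub_zero, smul_zero]
  have hsmall : (fun x ↦ ε x * (b x - b x₀)) =o[𝓝 x₀] fun x ↦ x - x₀ := by
    simpa using ((isLittleO_one_iff ℝ).mpr hε).mul_isBigO hb.isBigO_sub
  refine IsBigO.trans_isLittleO (IsBigO.of_bound 1 ?_) hsmall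
  filter_upwards [hF] with x hx
  rw [one_mul, norm_mul, norm_eq_abs (b x - b x₀)]
  exact (intervalIntegral.norm_integral_le_of_norm_le_const hx).trans
    (mul_le_mul_of_nonneg_right (le_norm_self _) (abs_nonneg _))

theorem hasDerivAt_integral_sqrt_sub {α : Type*} [MeasurableSpace α] {μ : Measure α}
    {V : α → ℝ} {x₀ : ℝ} (hV : AEStronglyMeasurable V μ) (hlt : ∀ᵐ a ∂μ, V a < x₀)
    (h_int : Integrable (fun a ↦ √(x₀ - V a)) μ)
    (h_int' : Integrable (fun a ↦ (x₀ - V a) ^ (-(1 / 2) : ℝ)) μ) :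
    HasDerivAt (fun x ↦ ∫ a, √(x - V a) ∂μ) ((∫ a, (x₀ - V a) ^ (-(1 / 2) : ℝ) ∂μ) / 2) x₀ := by
  rw [← integral_div]
  refine hasDerivAt_integral_of_dominated_loc_of_lip' univ_mem
    (fun x _ ↦ continuous_sqrt.comp_aestronglyMeasurable (aestronglyMeasurable_const.sub hV))
    h_int (h_int'.div_const 2).1 ?_ h_int' (hlt.mono fun a ha ↦ hasDerivAt_sqrt_sub_const ha)
  filter_upwards [hlt] with a ha x _
  have hpos : 0 < x₀ - V a := sub_pos.mpr ha
  calc ‖√(x - V a) - √(x₀ - V a)‖ ≤ |x - V a - (x₀ - V a)| / √(x₀ - V a) :=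
        abs_sqrt_sub_sqrt_le hpos
    _ = (x₀ - V a) ^ (-(1 / 2) : ℝ) * ‖x - x₀‖ := by
        rw [rpow_neg_half_eq_inv_sqrt hpos.le, sub_sub_sub_cancel_right, norm_eq_abs]
        ring

theorem hasDerivAt_intervalIntegral_sqrt_sub {V : ℝ → ℝ} {a b x₀ : ℝ} (hab : a ≤ b)
    (hV : ContinuousOn V (Icc a b)) (hlt : ∀ q ∈ Ioo a b, V q < x₀)
    (h_int : IntervalIntegrable (fun q ↦ (x₀ - V q) ^ (-(1 / 2) : ℝ)) volume a b) :
    HasDerivAt (fun x ↦ ∫ q in a..b, √(x - V q))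
      ((∫ q in a..b, (x₀ - V q) ^ (-(1 / 2) : ℝ)) / 2) x₀ := by
  simp only [intervalIntegral.integral_of_le hab]
  refine hasDerivAt_integral_sqrt_sub
    ((hV.mono Ioc_subset_Icc_self).aestronglyMeasurable measurableSet_Ioc) ?_
    ((continuousOn_const.sub hV).sqrt.integrableOn_Icc.mono_set Ioc_subset_Icc_self)
    ((intervalIntegrable_iff_integrableOn_Ioc_of_le hab).mp h_int)
  rw [← Measure.restrict_congr_set Ioo_ae_eq_Ioc]
  exact ae_restrict_of_forall_mem measurableSet_Ioo hlt

theorem MonotoneOn.sub_le_abs_of_mem_uIcc {f : ℝ → ℝ} {a b q : ℝ} (hf : MonotoneOn f (uIcc a b))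
    (hq : q ∈ uIcc a b) : f b - f q ≤ |f b - f a| := by
  have hmin : min a b ≤ q := hq.1
  rcases min_choice a b with h | h <;> rw [h] at hmin
  · linarith [hf left_mem_uIcc hq hmin, le_abs_self (f b - f a)]
  · linarith [hf right_mem_uIcc hq hmin, abs_nonneg (f b - f a)]

theorem action_hasDerivAt_general
    (m : ℝ)
    (U U' : ℝ → ℝ)
    (hUcont : ContinuousOn U (Set.Ici 0))
    (hUdiff : ∀ q > (0:ℝ), HasDerivAt U (U' q) q)
    (hU'pos : ∀ q > (0:ℝ), 0 < U' q)
    (qmax : ℝ → ℝ)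
    (hqmax : ∀ E > (0:ℝ), 0 < qmax E ∧ U (qmax E) = E)
    (E₀ : ℝ) (hE₀ : 0 < E₀)
    (hInt : ∀ᶠ E in nhds E₀, IntervalIntegrable
      (fun q => (E - U q) ^ (-(1/2) : ℝ)) MeasureTheory.volume 0 (qmax E)) :
    HasDerivAt
      (fun E => (Real.sqrt (2 * m) / Real.pi) *
        ∫ q in (0:ℝ)..(qmax E), Real.sqrt (E - U q))
      ((Real.sqrt (2 * m) / (2 * Real.pi)) *
        ∫ q in (0:ℝ)..(qmax E₀), (E₀ - U q) ^ (-(1/2) : ℝ)) E₀ := by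
  have hmono : StrictMonoOn U (Ici 0) :=
    strictMonoOn_of_hasDerivWithinAt_pos (convex_Ici 0) hUcont
      (fun q hq ↦ (hUdiff q (by simpa using hq)).hasDerivWithinAt)
      (fun q hq ↦ hU'pos q (by simpa using hq))
  obtain ⟨hq₀, hUq₀⟩ := hqmax E₀ hE₀
  have hbulk : HasDerivAt (fun E ↦ ∫ q in 0..qmax E₀, √(E - U q))
      ((∫ q in 0..qmax E₀, (E₀ - U q) ^ (-(1 / 2) : ℝ)) / 2) E₀ :=
    hasDerivAt_intervalIntegral_sqrt_sub hq₀.le (hUcont.mono Icc_subset_Ici_self)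
      (fun q hq ↦ hUq₀ ▸ hmono hq.1.le hq₀.le hq.2) hInt.self_of_nhds
  have hqmax' : HasDerivAt qmax (U' (qmax E₀))⁻¹ E₀ :=
    (hmono.mono Ioi_subset_Ici_self).hasDerivAt_of_rightInvOn (Ioi_mem_nhds hq₀)
      (Ioi_mem_nhds hE₀) (fun E hE ↦ (hqmax E hE).1) (fun E hE ↦ (hqmax E hE).2)
      (hUdiff _ hq₀) (hU'pos _ hq₀).ne'
  have hend : HasDerivAt (fun E ↦ ∫ q in qmax E₀..qmax E, √(E - U q)) 0 E₀ := by
    refine hasDerivAt_intervalIntegral_zero_of_norm_le hqmax'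
      ((show Continuous fun E ↦ √|E - E₀| by fun_prop).tendsto' _ _ (by simp)) ?_
    filter_upwards [Ioi_mem_nhds hE₀] with E hE q hq
    obtain ⟨hqE, hUqE⟩ := hqmax E hE
    have hsub : uIcc (qmax E₀) (qmax E) ⊆ Ici 0 := ordConnected_Ici.uIcc_subset hq₀.le hqE.le
    rw [norm_of_nonneg (sqrt_nonneg _)]
    refine sqrt_le_sqrt ?_
    simpa only [hUq₀, hUqE] using
      (hmono.monotoneOn.mono hsub).sub_le_abs_of_mem_uIcc (uIoc_subset_uIcc hq)
  have hsplit : (fun E ↦ ∫ q in 0..qmax E, √(E - U q)) =ᶠ[𝓝 E₀]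
      fun E ↦ (∫ q in 0..qmax E₀, √(E - U q)) + ∫ q in qmax E₀..qmax E, √(E - U q) := by
    have hcont : ∀ E, ContinuousOn (fun q ↦ √(E - U q)) (Ici 0) := fun E ↦
      (continuousOn_const.sub hUcont).sqrt
    filter_upwards [Ioi_mem_nhds hE₀] with E hE
    have hqE := (hqmax E hE).1
    exact (intervalIntegral.integral_add_adjacent_intervals
      ((hcont E).mono (ordConnected_Ici.uIcc_subset le_rfl hq₀.le)).intervalIntegrable
      ((hcont E).mono (ordConnected_Ici.uIcc_subset hq₀.le hqE.le)).intervalIntegrable).symm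
  have hJ := ((hbulk.add hend).congr_of_eventuallyEq hsplit).const_mul (√(2 * m) / π)
  exact hJ.congr_deriv (by ring)

/-- Leibniz differentiation of the action: under monotonicity and
local interval-integrability of `q ↦ (E − U q)^(−1/2)` near `E₀`, the action
`J E = (√(2m)/π) ∫₀^{qmax E} √(E − U q) dq` is differentiable at `E₀` with
`J'(E₀) = (√(2m)/(2π)) ∫₀^{qmax E₀} (E₀ − U q)^(−1/2) dq`; the endpoint term
vanishes since `E − U (qmax E) = 0`. -/
theorem action_hasDerivAt
    (m : ℝ) (hm : 0 < m)
    (U U' : ℝ → ℝ)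
    (hUcont : ContinuousOn U (Set.Ici 0))
    (hU0 : U 0 = 0)
    (hUdiff : ∀ q > (0:ℝ), HasDerivAt U (U' q) q)
    (hU'cont : ContinuousOn U' (Set.Ioi 0))
    (hU'pos : ∀ q > (0:ℝ), 0 < U' q)
    (hUtop : Filter.Tendsto U Filter.atTop Filter.atTop)
    (qmax : ℝ → ℝ)
    (hqmax : ∀ E > (0:ℝ), 0 < qmax E ∧ U (qmax E) = E)
    (E₀ : ℝ) (hE₀ : 0 < E₀)
    (hInt : ∀ᶠ E in nhds E₀, IntervalIntegrable
      (fun q => (E - U q) ^ (-(1/2) : ℝ)) MeasureTheory.volume 0 (qmax E)) :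
    HasDerivAt
      (fun E => (Real.sqrt (2 * m) / Real.pi) *
        ∫ q in (0:ℝ)..(qmax E), Real.sqrt (E - U q))
      ((Real.sqrt (2 * m) / (2 * Real.pi)) *
        ∫ q in (0:ℝ)..(qmax E₀), (E₀ - U q) ^ (-(1/2) : ℝ)) E₀ :=
  action_hasDerivAt_general m U U' hUcont hUdiff hU'pos qmax hqmax E₀ hE₀ hInt
end

section
/- Let m, M, K > 0 and let U : ℝ → ℝ be differentiable on (0,∞) with U(q) > 0 and U'(q) > 0 for q > 0. Let q : ℝ → ℝ be twice differentiable on an open interval I with q(t) > 0 for t ∈ I, satisfying m·q''(t) + U'(q(t)) = 0 on I. Define x(t) = √(2·U(q(t))/K), w(t) = √(m/M)·q'(t), and the time-reparametrisation rate r(t) = √(M/m)·U'(q(t))/√(2K·U(q(t))). Then for all t ∈ I: (i) x'(t) = r(t)·w(t), and (ii) M·w'(t) = −K·x(t)·r(t). (Equivalently, in the reparametrised time τ with dτ/dt = r, the transformed coordinate satisfies the exact harmonic oscillator equation M·d²x/dτ² + K·x = 0.) -/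
/-!
With `E = U ∘ q` one has `x = √(2E/K)`, so `x' = E'/(K x) = U'(q) q' / √(2 K U(q))`, which is `r w`
because `√(M/m) √(m/M) = 1`. For the velocity, the equation of motion gives
`w' = √(m/M) q'' = -√(m/M) U'(q)/m`, while `K x r = √(M/m) U'(q)` because `K x = √(2 K U(q))`;
the two agree since `√(m/M)/m = √(M/m)/M = 1/√(m M)`.
-/

open Real

lemma sqrt_div_mul_sqrt_div_swap {a b : ℝ} (ha : 0 < a) (hb : 0 < b) :
    √(a / b) * √(b / a) = 1 := by
  rw [← sqrt_mul (div_nonneg ha.le hb.le), div_mul_div_comm, mul_comm b, div_self (by positivity),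
    sqrt_one]

lemma sqrt_div_div_eq_sqrt_div_div {a b : ℝ} (ha : 0 < a) (hb : 0 < b) :
    √(a / b) / a = √(b / a) / b := by
  rw [sqrt_div' _ hb.le, sqrt_div' _ ha.le, div_div, div_div]
  field_simp
  rw [sq_sqrt ha.le, sq_sqrt hb.le, mul_comm]

lemma mul_sqrt_div_eq_sqrt_mul {K : ℝ} (y : ℝ) (hK : 0 < K) : K * √(y / K) = √(K * y) := by
  rw [← sqrt_sq hK.le, ← sqrt_mul (sq_nonneg K), sqrt_sq hK.le]
  field_simp

lemma HasDerivAt.sqrt_two_mul_div {E : ℝ → ℝ} {E' K t : ℝ} (hE : HasDerivAt E E' t)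
    (hK : 0 < K) (hEt : 0 < E t) :
    HasDerivAt (fun s => √(2 * E s / K)) (E' / √(2 * K * E t)) t := by
  refine (((hE.const_mul 2).div_const K).sqrt (by positivity)).congr_deriv ?_
  rw [show 2 * K * E t = K * (2 * E t) by ring, ← mul_sqrt_div_eq_sqrt_mul _ hK]
  field_simp

theorem harmonic_regularisation_general
    (m M K : ℝ) (hm : 0 < m) (hM : 0 < M) (hK : 0 < K)
    (U U' : ℝ → ℝ)
    (hUdiff : ∀ s > (0:ℝ), HasDerivAt U (U' s) s)
    (hUpos : ∀ s > (0:ℝ), 0 < U s)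
    (I : Set ℝ)
    (q q' q'' : ℝ → ℝ)
    (hq : ∀ t ∈ I, HasDerivAt q (q' t) t)
    (hq' : ∀ t ∈ I, HasDerivAt q' (q'' t) t)
    (hqpos : ∀ t ∈ I, 0 < q t)
    (hode : ∀ t ∈ I, m * q'' t + U' (q t) = 0)
    (x w r : ℝ → ℝ)
    (hx : ∀ t, x t = Real.sqrt (2 * U (q t) / K))
    (hw : ∀ t, w t = Real.sqrt (m / M) * q' t)
    (hr : ∀ t, r t = Real.sqrt (M / m) * U' (q t) / Real.sqrt (2 * K * U (q t))) :
    ∀ t ∈ I, HasDerivAt x (r t * w t) t ∧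
      HasDerivAt w (-(K * x t * r t) / M) t := by
  obtain rfl : x = _ := funext hx
  obtain rfl : w = _ := funext hw
  obtain rfl : r = _ := funext hr
  intro t ht
  dsimp only
  have hUq : 0 < U (q t) := hUpos _ (hqpos t ht)
  have hUq' : HasDerivAt (fun s => U (q s)) (U' (q t) * q' t) t :=
    (hUdiff _ (hqpos t ht)).comp t (hq t ht)
  have hKxr : K * √(2 * U (q t) / K) * (√(M / m) * U' (q t) / √(2 * K * U (q t)))
      = √(M / m) * U' (q t) := by
    rw [show 2 * K * U (q t) = K * (2 * U (q t)) by ring, ← mul_sqrt_div_eq_sqrt_mul _ hK]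
    field_simp
  have hw' : √(m / M) * q'' t = √(M / m) / M * (m * q'' t) := by
    rw [← sqrt_div_div_eq_sqrt_div_div hm hM]
    field_simp
  refine ⟨(hUq'.sqrt_two_mul_div hK hUq).congr_deriv ?_,
    ((hq' t ht).const_mul √(m / M)).congr_deriv ?_⟩
  · rw [div_mul_eq_mul_div, mul_mul_mul_comm, sqrt_div_mul_sqrt_div_swap hM hm]
    ring
  · rw [hKxr, hw', eq_neg_of_add_eq_zero_left (hode t ht)]
    ring

/-- **Theorem 2, harmonic regularisation.** For the conservative
contact oscillator `m q'' + U'(q) = 0` with `U > 0`, `U' > 0` on `(0,∞)`, the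
energy coordinate `x = √(2U(q)/K)`, the transformed velocity `w = √(m/M) q'`,
and the reparametrisation rate `r = √(M/m) U'(q)/√(2K U(q))` satisfy
`x' = r·w` and `M·w' = −K·x·r` on the interval, i.e. in the reparametrised time
`τ` (with `dτ/dt = r`) the motion is the exact harmonic oscillator
`M x'' + K x = 0`. -/
theorem harmonic_regularisation
    (m M K : ℝ) (hm : 0 < m) (hM : 0 < M) (hK : 0 < K)
    (U U' : ℝ → ℝ)
    (hUdiff : ∀ s > (0:ℝ), HasDerivAt U (U' s) s)
    (hUpos : ∀ s > (0:ℝ), 0 < U s)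
    (hU'pos : ∀ s > (0:ℝ), 0 < U' s)
    (I : Set ℝ) (hI : IsOpen I)
    (q q' q'' : ℝ → ℝ)
    (hq : ∀ t ∈ I, HasDerivAt q (q' t) t)
    (hq' : ∀ t ∈ I, HasDerivAt q' (q'' t) t)
    (hqpos : ∀ t ∈ I, 0 < q t)
    (hode : ∀ t ∈ I, m * q'' t + U' (q t) = 0)
    (x w r : ℝ → ℝ)
    (hx : ∀ t, x t = Real.sqrt (2 * U (q t) / K))
    (hw : ∀ t, w t = Real.sqrt (m / M) * q' t)
    (hr : ∀ t, r t = Real.sqrt (M / m) * U' (q t) / Real.sqrt (2 * K * U (q t))) :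
    ∀ t ∈ I, HasDerivAt x (r t * w t) t ∧
      HasDerivAt w (-(K * x t * r t) / M) t :=
  harmonic_regularisation_general m M K hm hM hK U U' hUdiff hUpos I q q' q'' hq hq' hqpos hode x w
    r hx hw hr
end

section
/- Let m, M, K, C₀ > 0 and let U : ℝ → ℝ be differentiable on (0,∞) with U(q) > 0 and U'(q) > 0 for q > 0, and let C : ℝ → ℝ. Let q : ℝ → ℝ be twice differentiable on an open interval I with q(t) > 0 on I, satisfying the damped equation m·q''(t) + C(q(t))·q'(t) + U'(q(t)) = 0 on I. Define x(t) = √(2·U(q(t))/K), w(t) = √(m/M)·q'(t), and r(t) = √(M/m)·U'(q(t))/√(2K·U(q(t))). Then at every t ∈ I with q'(t) ≠ 0, the transformed linear spring–dashpot equation M·w'(t) = −(C₀·w(t) + K·x(t))·r(t) holds if and only if C(q(t)) = C₀·√(m/M)·U'(q(t))/√(2K·U(q(t))). -/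
/-!
Since `M √(m/M) = m √(M/m)` and `K √(2U/K) = √(2KU)`, eliminating `m q''` with the oscillator
equation turns both sides of the transformed equation into `-√(M/m) (c q' + U'(q))`, with
`c = C(q)` on the left and `c = C₀ √(m/M) U'(q) / √(2KU(q))` on the right; as `q' ≠ 0`, they
agree exactly when the two damping coefficients do.
-/

theorem Real.mul_sqrt_div_eq_sqrt_mul {a c : ℝ} (hc : 0 ≤ c) :
    c * Real.sqrt (a / c) = Real.sqrt (c * a) := by
  rcases hc.eq_or_lt with rfl | hc
  · simp
  · rw [← Real.sqrt_sq hc.le, ← Real.sqrt_mul (sq_nonneg c), Real.sqrt_sq hc.le]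
    congr 1
    field_simp

theorem spring_dashpot_iff_damping_law {m M C₀ c v acc u' s a b : ℝ}
    (hab : M * a = m * b) (hb : b ≠ 0) (hs : s ≠ 0) (hv : v ≠ 0)
    (hode : m * acc + c * v + u' = 0) :
    M * (a * acc) = -(C₀ * (a * v) + s) * (b * u' / s) ↔ c = C₀ * a * u' / s := by
  have hlhs : M * (a * acc) = -b * (c * v + u') := by
    linear_combination acc * hab + b * hode
  have hrhs : -(C₀ * (a * v) + s) * (b * u' / s) = -b * (C₀ * a * u' / s * v + u') := by
    field_simp
  rw [hlhs, hrhs, mul_right_inj' (neg_ne_zero.2 hb), add_left_inj, mul_left_inj' hv]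

theorem universal_damping_law_iff_general
    (m M K C₀ : ℝ) (hm : 0 < m) (hM : 0 < M) (hK : 0 < K)
    (U U' C : ℝ → ℝ)
    (hUpos : ∀ s > (0:ℝ), 0 < U s)
    (I : Set ℝ)
    (q q' q'' : ℝ → ℝ)
    (hqpos : ∀ t ∈ I, 0 < q t)
    (hode : ∀ t ∈ I, m * q'' t + C (q t) * q' t + U' (q t) = 0)
    (x w r : ℝ → ℝ)
    (hx : ∀ t, x t = Real.sqrt (2 * U (q t) / K))
    (hw : ∀ t, w t = Real.sqrt (m / M) * q' t)
    (hr : ∀ t, r t = Real.sqrt (M / m) * U' (q t) / Real.sqrt (2 * K * U (q t))) :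
    ∀ t ∈ I, q' t ≠ 0 →
      (M * (Real.sqrt (m / M) * q'' t) = -(C₀ * w t + K * x t) * r t ↔
        C (q t) = C₀ * Real.sqrt (m / M) * U' (q t) /
          Real.sqrt (2 * K * U (q t))) := by
  intro t ht hv
  have hU : 0 < U (q t) := hUpos _ (hqpos t ht)
  have hKx : K * x t = Real.sqrt (2 * K * U (q t)) := by
    rw [hx, Real.mul_sqrt_div_eq_sqrt_mul hK.le, mul_left_comm, mul_assoc]
  have hMm : M * Real.sqrt (m / M) = m * Real.sqrt (M / m) := by
    rw [Real.mul_sqrt_div_eq_sqrt_mul hM.le, Real.mul_sqrt_div_eq_sqrt_mul hm.le, mul_comm]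
  rw [hKx, hw, hr]
  exact spring_dashpot_iff_damping_law hMm (Real.sqrt_pos.2 (div_pos hM hm)).ne'
    (Real.sqrt_pos.2 (by positivity)).ne' hv (hode t ht)

/-- **Theorem 3, necessity and sufficiency.** For the damped contact
oscillator `m q'' + C(q) q' + U'(q) = 0`, with energy coordinate
`x = √(2U(q)/K)`, transformed velocity `w = √(m/M) q'`, and reparametrisation
rate `r = √(M/m) U'(q)/√(2K U(q))`, at every instant with `q' ≠ 0` the
transformed linear spring–dashpot equation `M w' = −(C₀ w + K x)·r`
(where `w' = √(m/M) q''`) holds **iff** the damping obeys the universal law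
`C(q) = C₀ √(m/M) U'(q)/√(2K U(q))`. -/
theorem universal_damping_law_iff
    (m M K C₀ : ℝ) (hm : 0 < m) (hM : 0 < M) (hK : 0 < K) (hC₀ : 0 < C₀)
    (U U' C : ℝ → ℝ)
    (hUdiff : ∀ s > (0:ℝ), HasDerivAt U (U' s) s)
    (hUpos : ∀ s > (0:ℝ), 0 < U s)
    (hU'pos : ∀ s > (0:ℝ), 0 < U' s)
    (I : Set ℝ) (hI : IsOpen I)
    (q q' q'' : ℝ → ℝ)
    (hq : ∀ t ∈ I, HasDerivAt q (q' t) t)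
    (hq' : ∀ t ∈ I, HasDerivAt q' (q'' t) t)
    (hqpos : ∀ t ∈ I, 0 < q t)
    (hode : ∀ t ∈ I, m * q'' t + C (q t) * q' t + U' (q t) = 0)
    (x w r : ℝ → ℝ)
    (hx : ∀ t, x t = Real.sqrt (2 * U (q t) / K))
    (hw : ∀ t, w t = Real.sqrt (m / M) * q' t)
    (hr : ∀ t, r t = Real.sqrt (M / m) * U' (q t) / Real.sqrt (2 * K * U (q t))) :
    ∀ t ∈ I, q' t ≠ 0 →
      (M * (Real.sqrt (m / M) * q'' t) = -(C₀ * w t + K * x t) * r t ↔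
        C (q t) = C₀ * Real.sqrt (m / M) * U' (q t) /
          Real.sqrt (2 * K * U (q t))) :=
  universal_damping_law_iff_general m M K C₀ hm hM hK U U' C hUpos I q q' q'' hqpos hode x w r hx hw
    hr
end

section
/- Let U : ℝ → ℝ be twice differentiable on (0, b] with U(q) > 0 and U'(q) > 0 for q ∈ (0, b]. If the softening condition 2·U(q)·U''(q) ≤ (U'(q))² holds for all q ∈ (0, b], then the function q ↦ U'(q)/√(U(q)) is monotone nonincreasing on (0, b]; in particular the supremum of the transformation gradient over (0, b] is approached as q → 0⁺. -/
/-!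
The derivative of `U' / √U` is `(2 U U'' - U'²) / (2 U √U)`, so the softening condition is exactly
its nonpositivity. An antitone function on `(0, b]` tends, as `q → 0⁺`, to its supremum there.
-/

open Filter Set Topology

theorem HasDerivAt.div_sqrt {u v : ℝ → ℝ} {u' v' x : ℝ} (hu : HasDerivAt u u' x)
    (hv : HasDerivAt v v' x) (hx : 0 < u x) :
    HasDerivAt (fun y => v y / √(u y)) ((2 * u x * v' - u' * v x) / (2 * u x * √(u x))) x := by
  have hs : 0 < √(u x) := Real.sqrt_pos.2 hx
  refine (hv.div (hu.sqrt hx.ne') hs.ne').congr_deriv ?_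
  field_simp
  rw [Real.sq_sqrt hx.le]
  ring

theorem antitoneOn_div_sqrt_of_softening {D : Set ℝ} (hD : Convex ℝ D) {U U' U'' : ℝ → ℝ}
    (hU : ∀ q ∈ D, HasDerivAt U (U' q) q) (hU' : ∀ q ∈ D, HasDerivAt U' (U'' q) q)
    (hpos : ∀ q ∈ D, 0 < U q) (hsoft : ∀ q ∈ D, 2 * U q * U'' q ≤ U' q ^ 2) :
    AntitoneOn (fun q => U' q / √(U q)) D := by
  have hderiv (q : ℝ) (hq : q ∈ D) := (hU q hq).div_sqrt (hU' q hq) (hpos q hq)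
  refine antitoneOn_of_hasDerivWithinAt_nonpos hD
    (fun q hq => (hderiv q hq).continuousAt.continuousWithinAt)
    (fun q hq => (hderiv q (interior_subset hq)).hasDerivWithinAt) fun q hq => ?_
  have hq := interior_subset hq
  have hUq := hpos q hq
  have hnum : 2 * U q * U'' q - U' q * U' q ≤ 0 := by nlinarith [hsoft q hq]
  exact div_nonpos_of_nonpos_of_nonneg hnum (by positivity)

theorem AntitoneOn.tendsto_nhdsGT_iSup_Ioc {α β : Type*} [LinearOrder α] [TopologicalSpace α]
    [OrderTopology α] [CompleteLinearOrder β] [TopologicalSpace β] [OrderTopology β]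
    {f : α → β} {a b : α} (hab : a < b) (hf : AntitoneOn f (Ioc a b)) :
    Tendsto f (𝓝[>] a) (𝓝 (⨆ x ∈ Ioc a b, f x)) := by
  refine tendsto_order.2 ⟨fun l hl => ?_, fun m hm => ?_⟩
  · obtain ⟨z, hz, hlz⟩ := lt_biSup_iff.1 hl
    filter_upwards [Ioc_mem_nhdsGT hz.1] with w hw
    exact hlz.trans_le (hf ⟨hw.1, hw.2.trans hz.2⟩ hz hw.2)
  · filter_upwards [Ioc_mem_nhdsGT hab] with w hw
    exact (le_biSup f hw).trans_lt hm

theorem softening_gradient_antitone_general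
    (b : ℝ) (hb : 0 < b)
    (U U' U'' : ℝ → ℝ)
    (hUdiff : ∀ q ∈ Set.Ioc (0:ℝ) b, HasDerivAt U (U' q) q)
    (hU'diff : ∀ q ∈ Set.Ioc (0:ℝ) b, HasDerivAt U' (U'' q) q)
    (hUpos : ∀ q ∈ Set.Ioc (0:ℝ) b, 0 < U q)
    (hsoft : ∀ q ∈ Set.Ioc (0:ℝ) b, 2 * U q * U'' q ≤ (U' q)^2) :
    AntitoneOn (fun q => U' q / Real.sqrt (U q)) (Set.Ioc 0 b) ∧
      Filter.Tendsto (fun q => ((U' q / Real.sqrt (U q) : ℝ) : EReal))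
        (nhdsWithin 0 (Set.Ioi 0))
        (nhds (⨆ q ∈ Set.Ioc (0:ℝ) b, ((U' q / Real.sqrt (U q) : ℝ) : EReal))) := by
  have hanti := antitoneOn_div_sqrt_of_softening (convex_Ioc 0 b) hUdiff hU'diff hUpos hsoft
  exact ⟨hanti, (EReal.coe_strictMono.monotone.comp_antitoneOn hanti).tendsto_nhdsGT_iSup_Ioc hb⟩

/-- **softening contacts.** If `U > 0`, `U' > 0` on `(0, b]` and
the softening condition `2 U U'' ≤ (U')²` holds there, then the transformation
gradient `q ↦ U'(q)/√(U q)` is monotone nonincreasing on `(0, b]`; in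
particular its supremum over `(0, b]` (taken in the extended reals) is
approached as `q → 0⁺`. -/
theorem softening_gradient_antitone
    (b : ℝ) (hb : 0 < b)
    (U U' U'' : ℝ → ℝ)
    (hUdiff : ∀ q ∈ Set.Ioc (0:ℝ) b, HasDerivAt U (U' q) q)
    (hU'diff : ∀ q ∈ Set.Ioc (0:ℝ) b, HasDerivAt U' (U'' q) q)
    (hUpos : ∀ q ∈ Set.Ioc (0:ℝ) b, 0 < U q)
    (hU'pos : ∀ q ∈ Set.Ioc (0:ℝ) b, 0 < U' q)
    (hsoft : ∀ q ∈ Set.Ioc (0:ℝ) b, 2 * U q * U'' q ≤ (U' q)^2) :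
    AntitoneOn (fun q => U' q / Real.sqrt (U q)) (Set.Ioc 0 b) ∧
      Filter.Tendsto (fun q => ((U' q / Real.sqrt (U q) : ℝ) : EReal))
        (nhdsWithin 0 (Set.Ioi 0))
        (nhds (⨆ q ∈ Set.Ioc (0:ℝ) b, ((U' q / Real.sqrt (U q) : ℝ) : EReal))) :=
  softening_gradient_antitone_general b hb U U' U'' hUdiff hU'diff hUpos hsoft
end

section
/- Let m > 0, v₀ > 0, and let U : ℝ → ℝ be twice differentiable on (0, q_max] with U(q) > 0 and U'(q) > 0 on (0, q_max], satisfying the stiffening condition 2·U(q)·U''(q) ≥ (U'(q))² on (0, q_max], and the maximum-compression energy relation U(q_max) = (1/2)·m·v₀². Then the supremum over q ∈ (0, q_max] of U'(q)/√(2·U(q)) equals U'(q_max)/(√m · v₀), and consequently the closed-form stability bound holds: Δt_safe := 2·√m · (sup_{q ∈ (0,q_max]} U'(q)/√(2·U(q)))⁻¹ = 2·m·v₀ / U'(q_max). -/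
/-!
The derivative of `U'/√(2U)` is `(2 U U'' - U'²) / (2U)^{3/2}`, so the stiffening condition
makes it nondecreasing. Its supremum over `(0, qmax]` is therefore attained at `qmax`, where
energy conservation gives `√(2 U qmax) = √m · v₀`.
-/

open Set

theorem hasDerivAt_div_sqrt_two_mul {U U' : ℝ → ℝ} {u'' q : ℝ}
    (hU : HasDerivAt U (U' q) q) (hU' : HasDerivAt U' u'' q) (hpos : 0 < U q) :
    HasDerivAt (fun x => U' x / √(2 * U x))
      ((2 * U q * u'' - U' q ^ 2) / (2 * U q * √(2 * U q))) q := by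
  have hroot : 0 < √(2 * U q) := Real.sqrt_pos.2 (by positivity)
  have hsq : √(2 * U q) ^ 2 = 2 * U q := Real.sq_sqrt (by positivity)
  refine (hU'.div ((hU.const_mul 2).sqrt (by positivity)) hroot.ne').congr_deriv ?_
  field_simp
  rw [hsq]
  ring

theorem monotoneOn_div_sqrt_two_mul_of_stiffening {s : Set ℝ} (hs : Convex ℝ s)
    {U U' U'' : ℝ → ℝ}
    (hUdiff : ∀ q ∈ s, HasDerivAt U (U' q) q) (hU'diff : ∀ q ∈ s, HasDerivAt U' (U'' q) q)
    (hUpos : ∀ q ∈ s, 0 < U q) (hstiff : ∀ q ∈ s, U' q ^ 2 ≤ 2 * U q * U'' q) :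
    MonotoneOn (fun q => U' q / √(2 * U q)) s := by
  have hderiv q (hq : q ∈ s) :=
    hasDerivAt_div_sqrt_two_mul (hUdiff q hq) (hU'diff q hq) (hUpos q hq)
  refine monotoneOn_of_hasDerivWithinAt_nonneg hs
    (fun q hq => (hderiv q hq).continuousAt.continuousWithinAt)
    (fun q hq => (hderiv q (interior_subset hq)).hasDerivWithinAt) fun q hq => ?_
  have hq := interior_subset hq
  have hUq := hUpos q hq
  exact div_nonneg (sub_nonneg.2 (hstiff q hq)) (by positivity)

theorem stability_bound_at_max_compression_general
    (m v₀ qmax : ℝ) (hm : 0 < m) (hv₀ : 0 < v₀) (hqmax : 0 < qmax)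
    (U U' U'' : ℝ → ℝ)
    (hUdiff : ∀ q ∈ Set.Ioc (0:ℝ) qmax, HasDerivAt U (U' q) q)
    (hU'diff : ∀ q ∈ Set.Ioc (0:ℝ) qmax, HasDerivAt U' (U'' q) q)
    (hUpos : ∀ q ∈ Set.Ioc (0:ℝ) qmax, 0 < U q)
    (hstiff : ∀ q ∈ Set.Ioc (0:ℝ) qmax, (U' q)^2 ≤ 2 * U q * U'' q)
    (hEnergy : U qmax = (1/2) * m * v₀^2) :
    sSup ((fun q => U' q / Real.sqrt (2 * U q)) '' Set.Ioc (0:ℝ) qmax)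
        = U' qmax / (Real.sqrt m * v₀) ∧
      2 * Real.sqrt m *
        (sSup ((fun q => U' q / Real.sqrt (2 * U q)) '' Set.Ioc (0:ℝ) qmax))⁻¹
        = 2 * m * v₀ / U' qmax := by
  have hsup : sSup ((fun q => U' q / √(2 * U q)) '' Ioc 0 qmax) = U' qmax / √(2 * U qmax) :=
    ((monotoneOn_div_sqrt_two_mul_of_stiffening (convex_Ioc 0 qmax) hUdiff hU'diff hUpos
      hstiff).map_isGreatest (isGreatest_Ioc hqmax)).csSup_eq
  have hroot : √(2 * U qmax) = √m * v₀ := by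
    rw [hEnergy, show 2 * (1 / 2 * m * v₀ ^ 2) = m * v₀ ^ 2 by ring,
      Real.sqrt_mul hm.le, Real.sqrt_sq hv₀.le]
  rw [hsup, hroot, inv_div]
  refine ⟨rfl, ?_⟩
  linear_combination 2 * v₀ / U' qmax * Real.mul_self_sqrt hm.le

/-- **closed-form stability bound at maximum compression.** For a
monotone stiffening contact (`2 U U'' ≥ (U')²` on `(0, qmax]`) with
`U qmax = (1/2) m v₀²` (energy conservation at maximum compression), the
supremum over `(0, qmax]` of the transformation gradient `U'(q)/√(2 U q)`
equals `U'(qmax)/(√m · v₀)`, and consequently the stability bound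
`Δt_safe = 2√m · (sup ...)⁻¹ = 2 m v₀ / U'(qmax)`. -/
theorem stability_bound_at_max_compression
    (m v₀ qmax : ℝ) (hm : 0 < m) (hv₀ : 0 < v₀) (hqmax : 0 < qmax)
    (U U' U'' : ℝ → ℝ)
    (hUdiff : ∀ q ∈ Set.Ioc (0:ℝ) qmax, HasDerivAt U (U' q) q)
    (hU'diff : ∀ q ∈ Set.Ioc (0:ℝ) qmax, HasDerivAt U' (U'' q) q)
    (hUpos : ∀ q ∈ Set.Ioc (0:ℝ) qmax, 0 < U q)
    (hU'pos : ∀ q ∈ Set.Ioc (0:ℝ) qmax, 0 < U' q)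
    (hstiff : ∀ q ∈ Set.Ioc (0:ℝ) qmax, (U' q)^2 ≤ 2 * U q * U'' q)
    (hEnergy : U qmax = (1/2) * m * v₀^2) :
    sSup ((fun q => U' q / Real.sqrt (2 * U q)) '' Set.Ioc (0:ℝ) qmax)
        = U' qmax / (Real.sqrt m * v₀) ∧
      2 * Real.sqrt m *
        (sSup ((fun q => U' q / Real.sqrt (2 * U q)) '' Set.Ioc (0:ℝ) qmax))⁻¹
        = 2 * m * v₀ / U' qmax :=
  stability_bound_at_max_compression_general m v₀ qmax hm hv₀ hqmax U U' U'' hUdiff hU'diff hUpos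
    hstiff hEnergy
end

section
/- Let m, K, M₀ > 0 and let U : ℝ → ℝ be continuous on [0,∞) and differentiable on (0,∞) with U(0) = 0, U(q) > 0 and U'(q) > 0 for q > 0. Then the effective mass 2·m·K·U(q)/(U'(q))² equals the constant M₀ for all q > 0 if and only if U(q) = (m·K/(2·M₀))·q² for all q ≥ 0. In other words, the point-canonical lift reduces to a constant-mass harmonic oscillator in physical time if and only if U(q) ∝ q². -/
/-! If the effective mass is the constant `M₀`, then `U'² = 4 a U` with `a = m K / (2 M₀)`, and since
`U, U' > 0` this says `(√U)' = √a` on `(0, ∞)`. By the mean value theorem on `[0, q]` and `U 0 = 0`,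
`√(U q) = √a · q`, i.e. `U q = a q²`. -/

open Real Set

lemma effective_mass_eq_iff {m K M₀ u u' : ℝ} (hM₀ : M₀ ≠ 0) (hu' : u' ≠ 0) :
    2 * m * K * u / u' ^ 2 = M₀ ↔ u' ^ 2 = 4 * (m * K / (2 * M₀)) * u := by
  rw [div_eq_iff (pow_ne_zero 2 hu')]
  field_simp
  constructor <;> intro h <;> linarith

lemma eq_two_mul_sqrt_mul_sqrt_of_sq_eq {a y u : ℝ} (ha : 0 ≤ a) (hy : 0 ≤ y) (hu : 0 ≤ u)
    (h : u ^ 2 = 4 * a * y) : u = 2 * √a * √y := by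
  refine (pow_left_inj₀ hu (by positivity) two_ne_zero).mp ?_
  rw [h, mul_pow, mul_pow, sq_sqrt ha, sq_sqrt hy]
  ring

lemma eq_sq_mul_sq_of_deriv_eq_two_mul_sqrt {U U' : ℝ → ℝ} {c : ℝ}
    (hUcont : ContinuousOn U (Ici 0)) (hU0 : U 0 = 0)
    (hUdiff : ∀ q > 0, HasDerivAt U (U' q) q) (hUpos : ∀ q > 0, 0 < U q)
    (hode : ∀ q > 0, U' q = 2 * c * √(U q)) {q : ℝ} (hq : 0 ≤ q) :
    U q = c ^ 2 * q ^ 2 := by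
  rcases hq.eq_or_lt with rfl | hq
  · simp [hU0]
  have hsqrt_deriv : ∀ x ∈ Ioo 0 q, HasDerivAt (fun x ↦ √(U x)) c x := by
    intro x hx
    have hUx := hUpos x hx.1
    convert (hUdiff x hx.1).sqrt hUx.ne' using 1
    rw [hode x hx.1]
    field_simp [(sqrt_pos.mpr hUx).ne']
  obtain ⟨x, -, hslope⟩ := exists_hasDerivAt_eq_slope (fun x ↦ √(U x)) (fun _ ↦ c) hq
    ((continuous_sqrt.comp_continuousOn hUcont).mono Icc_subset_Ici_self) hsqrt_deriv
  have hsqrt : √(U q) = c * q := by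
    rw [hslope, hU0, sqrt_zero, sub_zero, sub_zero, div_mul_cancel₀ _ hq.ne']
  rw [← sq_sqrt (hUpos q hq).le, hsqrt, mul_pow]

/-- **constant effective mass iff quadratic potential.** For a
contact potential `U` continuous on `[0,∞)`, differentiable on `(0,∞)` with
`U 0 = 0`, `U > 0` and `U' > 0` on `(0,∞)`, the effective mass
`M_eff(q) = 2 m K U(q)/U'(q)²` is the constant `M₀` for all `q > 0` **iff**
`U(q) = (m K/(2 M₀)) q²` for all `q ≥ 0`. -/
theorem constant_effective_mass_iff_quadratic
    (m K M₀ : ℝ) (hm : 0 < m) (hK : 0 < K) (hM₀ : 0 < M₀)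
    (U U' : ℝ → ℝ)
    (hUcont : ContinuousOn U (Set.Ici 0))
    (hU0 : U 0 = 0)
    (hUdiff : ∀ q > (0:ℝ), HasDerivAt U (U' q) q)
    (hUpos : ∀ q > (0:ℝ), 0 < U q)
    (hU'pos : ∀ q > (0:ℝ), 0 < U' q) :
    (∀ q > (0:ℝ), 2 * m * K * U q / (U' q)^2 = M₀) ↔
      (∀ q ≥ (0:ℝ), U q = (m * K / (2 * M₀)) * q^2) := by
  have ha : 0 < m * K / (2 * M₀) := by positivity
  constructor
  · intro hmass q hq
    have hode : ∀ x > 0, U' x = 2 * √(m * K / (2 * M₀)) * √(U x) := fun x hx ↦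
      eq_two_mul_sqrt_mul_sqrt_of_sq_eq ha.le (hUpos x hx).le (hU'pos x hx).le
        ((effective_mass_eq_iff hM₀.ne' (hU'pos x hx).ne').mp (hmass x hx))
    rw [eq_sq_mul_sq_of_deriv_eq_two_mul_sqrt hUcont hU0 hUdiff hUpos hode hq, sq_sqrt ha.le]
  · intro hquad q hq
    have hU'q : U' q = 2 * (m * K / (2 * M₀)) * q := by
      have hloc : U =ᶠ[nhds q] fun x ↦ m * K / (2 * M₀) * x ^ 2 :=
        Filter.mem_of_superset (Ioi_mem_nhds hq) fun x hx ↦ hquad x (le_of_lt hx)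
      refine (hUdiff q hq).unique (HasDerivAt.congr_of_eventuallyEq ?_ hloc)
      exact ((hasDerivAt_pow 2 q).const_mul _).congr_deriv (by ring)
    rw [effective_mass_eq_iff hM₀.ne' (hU'pos q hq).ne', hquad q hq.le, hU'q]
    ring
end

section
/- Let a, b, c > 0 and define V(δ) = (π·b·c/a²)·(a·δ² − δ³/3) and S(δ) = (π·b·c/a²)·(2·a·δ − δ²), with S'(δ) = (π·b·c/a²)·(2·a − 2·δ). Then for every δ with 0 < δ < 2a, the inequality 4·V(δ)·S'(δ) ≥ S(δ)² holds if and only if δ ≤ (2 − 2·√(2/5))·a. Consequently, for the α = 1/2 volumetric ellipsoid contact model (where the stiffening condition 2·U·U'' ≥ (U')² is equivalent to (α−1)·S² + 2·V·S' ≥ 0, i.e. to 4·V·S' ≥ S²), the model is monotone stiffening precisely on the penetration range 0 < δ ≤ (2 − 2·√(2/5))·a ≈ 0.735·a. -/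
/-!
The stiffening defect `4 V S' - S²` factors as `(πbc/a² · δ)² / 3 · (5δ² - 20aδ + 12a²)`, so for
`δ > 0` its sign is that of the quadratic. The roots of the quadratic are `(2 ± 2√(2/5)) a`, and the
larger one exceeds `2a`, so on `0 < δ < 2a` the quadratic is nonnegative exactly up to the smaller root.
-/

open Real

theorem stiffening_defect_eq (P a δ : ℝ) :
    4 * (P * (a * δ ^ 2 - δ ^ 3 / 3)) * (P * (2 * a - 2 * δ)) - (P * (2 * a * δ - δ ^ 2)) ^ 2
      = (P * δ) ^ 2 / 3 * (5 * δ ^ 2 - 20 * a * δ + 12 * a ^ 2) := by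
  ring

theorem stiffening_quadratic_eq_mul (a δ : ℝ) :
    5 * δ ^ 2 - 20 * a * δ + 12 * a ^ 2
      = 5 * ((2 - 2 * √(2 / 5)) * a - δ) * ((2 + 2 * √(2 / 5)) * a - δ) := by
  have hsq : √(2 / 5) ^ 2 = 2 / 5 := sq_sqrt (by norm_num)
  linear_combination (20 * a ^ 2) * hsq

theorem stiffening_quadratic_nonneg_iff {a δ : ℝ} (ha : 0 < a) (hδ : δ < 2 * a) :
    0 ≤ 5 * δ ^ 2 - 20 * a * δ + 12 * a ^ 2 ↔ δ ≤ (2 - 2 * √(2 / 5)) * a := by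
  have hlarge : 0 < (2 + 2 * √(2 / 5)) * a - δ := by
    nlinarith [mul_nonneg (sqrt_nonneg (2 / 5)) ha.le]
  rw [stiffening_quadratic_eq_mul, mul_nonneg_iff_of_pos_right hlarge,
    mul_nonneg_iff_of_pos_left (by norm_num), sub_nonneg]

/-- **stiffening range for the α = 1/2 ellipsoid model.** For the
ellipsoid overlap volume `V(δ) = (πbc/a²)(aδ² − δ³/3)`, contact area
`S(δ) = (πbc/a²)(2aδ − δ²)` and its derivative `S'(δ) = (πbc/a²)(2a − 2δ)`,
for every `0 < δ < 2a` the stiffening inequality `4 V S' ≥ S²` (equivalent to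
`2 U U'' ≥ (U')²` for the `α = 1/2` volumetric model) holds iff
`δ ≤ (2 − 2√(2/5)) a ≈ 0.735 a`. -/
theorem ellipsoid_stiffening_range
    (a b c : ℝ) (ha : 0 < a) (hb : 0 < b) (hc : 0 < c)
    (V S S' : ℝ → ℝ)
    (hV : ∀ δ : ℝ, V δ = Real.pi * b * c / a ^ 2 * (a * δ ^ 2 - δ ^ 3 / 3))
    (hS : ∀ δ : ℝ, S δ = Real.pi * b * c / a ^ 2 * (2 * a * δ - δ ^ 2))
    (hS' : ∀ δ : ℝ, S' δ = Real.pi * b * c / a ^ 2 * (2 * a - 2 * δ)) :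
    ∀ δ : ℝ, 0 < δ → δ < 2 * a →
      (4 * V δ * S' δ ≥ (S δ) ^ 2 ↔ δ ≤ (2 - 2 * Real.sqrt (2 / 5)) * a) := by
  intro δ hδ hδ2
  have hscale : 0 < (π * b * c / a ^ 2 * δ) ^ 2 / 3 := by positivity
  rw [hV, hS, hS', ge_iff_le, ← sub_nonneg, stiffening_defect_eq,
    mul_nonneg_iff_of_pos_left hscale, stiffening_quadratic_nonneg_iff ha hδ2]
end
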